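/- arXiv:2304.05142 — 5 statements merged into one kernel-verified Lean document; each statement's English description precedes it below -/
import Mathlib

section
/- If a strategy σ is incentive compatible — meaning V_e(H, σ) ≥ V_e(H', σ) whenever the consistent sequence H extends H' — then for every expert type h with h₀ ≼ h, there exists a best response H ∈ BR(h₀, h, σ) with final element H₋₁ = h (i.e., σ is fully revealing). -/
/-- A consistent sequence: a nonempty, strictly increasing chain beginning at `h₀`. -/
def Cons {𝓗 : Type} [Preorder 𝓗] (h₀ : 𝓗) (H : List 𝓗) : Prop :=
  H ≠ [] ∧ H.head? = some h₀ ∧ H.Chain' (· < ·)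

/-- Membership in `𝓗(h₀, h)`: a consistent sequence whose final element is `≤ h`. -/
def Memb {𝓗 : Type} [Preorder 𝓗] (h₀ h : 𝓗) (H : List 𝓗) : Prop :=
  Cons h₀ H ∧ H.getLastD h₀ ≤ h

/-- `H` is a best response for type `h` given expert payoff function `Ve`. -/
def BRp {𝓗 : Type} [Preorder 𝓗] (h₀ : 𝓗) (Ve : List 𝓗 → ℝ) (h : 𝓗) (H : List 𝓗) : Prop :=
  Memb h₀ h H ∧ ∀ H', Memb h₀ h H' → Ve H' ≤ Ve H

/-! A best response exists because `𝓗(h₀, h)` is finite (consistent sequences are strictly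
increasing, hence have no repeated types) and contains `[h₀]`. If a maximiser `H` does not end
at `h`, then `H ++ [h]` is still in `𝓗(h₀, h)`, and incentive compatibility gives it at least the
payoff of `H`, so it is a best response ending at `h`. -/

namespace Cons

variable {𝓗 : Type} [Preorder 𝓗] {h₀ : 𝓗} {H : List 𝓗}

theorem nodup (hH : Cons h₀ H) : H.Nodup :=
  (List.isChain_iff_pairwise.mp hH.2.2).imp ne_of_lt

theorem append_singleton {h : 𝓗} (hH : Cons h₀ H) (hlt : H.getLastD h₀ < h) :
    Cons h₀ (H ++ [h]) := by
  obtain ⟨hne, hhead, hchain⟩ := hH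
  refine ⟨by simp, by rwa [List.head?_append_of_ne_nil _ hne], ?_⟩
  refine List.isChain_append.mpr ⟨hchain, List.isChain_singleton _, fun x hx y hy => ?_⟩
  obtain rfl : h = y := by simpa using hy
  rwa [List.getLastD_eq_getLast?, hx] at hlt

end Cons

section Memb

variable {𝓗 : Type} [Preorder 𝓗] {h₀ h : 𝓗}

theorem memb_singleton (hle : h₀ ≤ h) : Memb h₀ h [h₀] :=
  ⟨⟨by simp, by simp, List.isChain_singleton _⟩, hle⟩

theorem Memb.append_singleton {H : List 𝓗} (hH : Memb h₀ h H) (hlt : H.getLastD h₀ < h) :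
    Memb h₀ h (H ++ [h]) :=
  ⟨hH.1.append_singleton hlt, by simp⟩

theorem finite_setOf_memb [Finite 𝓗] : {H | Memb h₀ h H}.Finite := by
  have := Fintype.ofFinite 𝓗
  exact (List.finite_length_le 𝓗 (Fintype.card 𝓗)).subset
    fun _ hH => hH.1.nodup.length_le_card

theorem exists_brp [Finite 𝓗] (hle : h₀ ≤ h) (Ve : List 𝓗 → ℝ) : ∃ H, BRp h₀ Ve h H :=
  Set.exists_max_image _ Ve finite_setOf_memb ⟨_, memb_singleton hle⟩

end Memb

/-- an incentive compatible strategy (expert payoff monotone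
along extensions) is fully revealing: every type `h` has a best response whose
final element is `h`. -/
theorem IC_implies_fully_revealing
    {𝓗 : Type} [Fintype 𝓗] [PartialOrder 𝓗] (h₀ : 𝓗) (hmin : ∀ h : 𝓗, h₀ ≤ h)
    (Ve : List 𝓗 → ℝ)
    (hIC : ∀ H H' : List 𝓗, Cons h₀ H → H' ≠ [] → H' <+: H → Ve H' ≤ Ve H) :
    ∀ h : 𝓗, ∃ H : List 𝓗, BRp h₀ Ve h H ∧ H.getLastD h₀ = h := by
  intro h
  obtain ⟨H, hbr⟩ := exists_brp (hmin h) Ve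
  have ⟨hH, hHmax⟩ := hbr
  by_cases hlast : H.getLastD h₀ = h
  · exact ⟨H, hbr, hlast⟩
  have hlt : H.getLastD h₀ < h := lt_of_le_of_ne hH.2 hlast
  have hext := hH.append_singleton hlt
  have hgain : Ve H ≤ Ve (H ++ [h]) := hIC _ H hext.1 hH.1.1 ⟨[h], rfl⟩
  exact ⟨H ++ [h], ⟨hext, fun H' hH' => (hHmax H' hH').trans hgain⟩,
    by simp⟩
end

section
/- If a strategy σ is myopically optimal at every chain H — i.e., σ(H) maximizes the decision maker's value V_d(H₋₁, 𝔠) subject to V_e(H₋₁, 𝔠) ≥ V_e(H₋₂, σ(H minus last element)) (constraint active when H has length ≥ 2) — then the decision maker's payoff is monotone along extensions: V_d(H, σ) ≥ V_d(H', σ) whenever H extends H'. -/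
/-! The contract chosen one step earlier pulls back to the current state-space with both values
unchanged, so it is feasible for the current constrained problem (its `Ve`-constraint holds with
equality) and the constrained optimum is at least its `Vd`-value, the previous optimum.
Monotonicity along prefixes follows by removing the last element one step at a time. -/

theorem List.le_of_prefix_of_dropLast_le {α β : Type*} [Preorder β] (P : List α → Prop)
    (f : List α → β) (hP : ∀ l, P l → 2 ≤ l.length → P l.dropLast)
    (hf : ∀ l, P l → 2 ≤ l.length → f l.dropLast ≤ f l)
    {l l' : List α} (hl : P l) (hne : l' ≠ []) (hpre : l' <+: l) : f l' ≤ f l := by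
  obtain ⟨t, rfl⟩ := hpre
  induction t using List.reverseRecOn with
  | nil => rw [List.append_nil]
  | append_singleton t a ih =>
    have hlen : 2 ≤ (l' ++ (t ++ [a])).length := by
      have := List.length_pos_iff.mpr hne
      simp only [List.length_append, List.length_singleton]
      omega
    have hdrop : (l' ++ (t ++ [a])).dropLast = l' ++ t := by
      rw [← List.append_assoc, List.dropLast_concat]
    rw [← hdrop] at ih
    exact (ih (hP _ hl hlen)).trans (hf _ hl hlen)

theorem List.IsChain.getLastD_dropLast_lt {α : Type*} [Preorder α] (d : α) {l : List α}
    (h : l.IsChain (· < ·)) (h2 : 2 ≤ l.length) : l.dropLast.getLastD d < l.getLastD d := by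
  induction l using List.reverseRecOn with
  | nil => simp at h2
  | append_singleton l b _ =>
    obtain ⟨l, a, rfl⟩ := l.eq_nil_or_concat.resolve_left (by rintro rfl; simp at h2)
    rw [List.concat_eq_append, List.dropLast_concat, List.getLastD_concat, List.getLastD_concat]
    rw [List.concat_eq_append, List.append_assoc, List.singleton_append,
      List.isChain_append_cons_cons] at h
    exact h.2.1

theorem Cons.dropLast {𝓗 : Type} [Preorder 𝓗] {h₀ : 𝓗} {H : List 𝓗}
    (hH : Cons h₀ H) (h2 : 2 ≤ H.length) : Cons h₀ H.dropLast := by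
  obtain ⟨-, hhead, hchain⟩ := hH
  match H, h2 with
  | x :: y :: t, _ =>
    exact ⟨by simp, by simpa using hhead, List.IsChain.prefix hchain (List.dropLast_prefix _)⟩

theorem le_of_constrained_max_of_pullback {𝓗 : Type} [LE 𝓗] {C : 𝓗 → Type}
    {Vd Ve : (h : 𝓗) → C h → ℝ}
    (pb : ∀ {h h' : 𝓗}, h ≤ h' → C h → C h')
    (hpbd : ∀ {h h' : 𝓗} (l : h ≤ h') (c : C h), Vd h' (pb l c) = Vd h c)
    (hpbe : ∀ {h h' : 𝓗} (l : h ≤ h') (c : C h), Ve h' (pb l c) = Ve h c)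
    {h h' : 𝓗} (hle : h ≤ h') (c : C h) {c' : C h'}
    (hc' : ∀ x : C h', Ve h c ≤ Ve h' x → Vd h' x ≤ Vd h' c') : Vd h c ≤ Vd h' c' :=
  hpbd hle c ▸ hc' (pb hle c) (hpbe hle c).ge

theorem myopic_optimality_implies_Vd_monotone_general
    {𝓗 : Type} [PartialOrder 𝓗] (h₀ : 𝓗)
    (C : 𝓗 → Type) (Vd Ve : (h : 𝓗) → C h → ℝ)
    (pb : ∀ {h h' : 𝓗}, h ≤ h' → C h → C h')
    (hpbd : ∀ {h h' : 𝓗} (l : h ≤ h') (c : C h), Vd h' (pb l c) = Vd h c)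
    (hpbe : ∀ {h h' : 𝓗} (l : h ≤ h') (c : C h), Ve h' (pb l c) = Ve h c)
    (σ : (H : List 𝓗) → C (H.getLastD h₀))
    -- myopic optimality at longer chains: maximize Vd subject to the IC constraint
    (hmyo : ∀ H : List 𝓗, Cons h₀ H → 2 ≤ H.length →
      Ve (H.dropLast.getLastD h₀) (σ H.dropLast) ≤ Ve (H.getLastD h₀) (σ H) ∧
      ∀ c : C (H.getLastD h₀),
        Ve (H.dropLast.getLastD h₀) (σ H.dropLast) ≤ Ve (H.getLastD h₀) c →
        Vd (H.getLastD h₀) c ≤ Vd (H.getLastD h₀) (σ H)) :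
    ∀ H H' : List 𝓗, Cons h₀ H → H' ≠ [] → H' <+: H →
      Vd (H'.getLastD h₀) (σ H') ≤ Vd (H.getLastD h₀) (σ H) := by
  intro H H' hH hne hpre
  refine List.le_of_prefix_of_dropLast_le (Cons h₀) (fun H ↦ Vd (H.getLastD h₀) (σ H))
    (fun _ hl h2 ↦ hl.dropLast h2) (fun l hl h2 ↦ ?_) hH hne hpre
  have hlast : l.dropLast.getLastD h₀ ≤ l.getLastD h₀ :=
    (List.IsChain.getLastD_dropLast_lt h₀ hl.2.2 h2).le
  exact le_of_constrained_max_of_pullback pb hpbd hpbe hlast _ (hmyo l hl h2).2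

/-- if a strategy is myopically optimal at every chain, then the
decision maker's payoff is monotone along chain extensions. -/
theorem myopic_optimality_implies_Vd_monotone
    {𝓗 : Type} [PartialOrder 𝓗] (h₀ : 𝓗)
    (C : 𝓗 → Type) (Vd Ve : (h : 𝓗) → C h → ℝ)
    (pb : ∀ {h h' : 𝓗}, h ≤ h' → C h → C h')
    (hpbd : ∀ {h h' : 𝓗} (l : h ≤ h') (c : C h), Vd h' (pb l c) = Vd h c)
    (hpbe : ∀ {h h' : 𝓗} (l : h ≤ h') (c : C h), Ve h' (pb l c) = Ve h c)
    (σ : (H : List 𝓗) → C (H.getLastD h₀))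
    -- myopic optimality at length-one chains: unconstrained maximization of Vd
    (hmyo1 : ∀ H : List 𝓗, Cons h₀ H → H.length = 1 →
      ∀ c : C (H.getLastD h₀), Vd (H.getLastD h₀) c ≤ Vd (H.getLastD h₀) (σ H))
    -- myopic optimality at longer chains: maximize Vd subject to the IC constraint
    (hmyo : ∀ H : List 𝓗, Cons h₀ H → 2 ≤ H.length →
      Ve (H.dropLast.getLastD h₀) (σ H.dropLast) ≤ Ve (H.getLastD h₀) (σ H) ∧
      ∀ c : C (H.getLastD h₀),
        Ve (H.dropLast.getLastD h₀) (σ H.dropLast) ≤ Ve (H.getLastD h₀) c →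
        Vd (H.getLastD h₀) c ≤ Vd (H.getLastD h₀) (σ H)) :
    ∀ H H' : List 𝓗, Cons h₀ H → H' ≠ [] → H' <+: H →
      Vd (H'.getLastD h₀) (σ H') ≤ Vd (H.getLastD h₀) (σ H) :=
  myopic_optimality_implies_Vd_monotone_general h₀ C Vd Ve pb hpbd hpbe σ hmyo
end

section
/- Along the point-wise V_d-maximal robust strategy — defined by choosing, at each chain H, the V_e-minimal element among the myopically optimal contracts ξ(H, σ) — the expert's payoff is point-wise minimal among all everywhere-myopically-optimal strategies: for every chain H and every strategy σ that is myopically optimal at all chains, V_e(H, σ̄) ≤ V_e(H, σ), where σ̄ is the V_e-minimal myopic strategy. Consequently V_d(H, σ̄) ≥ V_d(H, σ) for all H. -/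
/-- Value of the chain `H` to the player with functional `V`, under `σ`. -/
def val {𝓗 : Type} [Preorder 𝓗] (h₀ : 𝓗) {C : 𝓗 → Type} (V : (h : 𝓗) → C h → ℝ)
    (σ : (H : List 𝓗) → C (H.getLastD h₀)) (H : List 𝓗) : ℝ :=
  V (H.getLastD h₀) (σ H)

/-- Membership in the myopic argmax set `ξ(H, σ)`: `c` maximizes `Vd` at `H₋₁`
subject to the IC constraint induced by `σ`'s previous contract (the constraint
is absent on the length-one chain). -/
def InXi {𝓗 : Type} [Preorder 𝓗] (h₀ : 𝓗) {C : 𝓗 → Type} (Vd Ve : (h : 𝓗) → C h → ℝ)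
    (σ : (H : List 𝓗) → C (H.getLastD h₀)) (H : List 𝓗) (c : C (H.getLastD h₀)) : Prop :=
  (2 ≤ H.length → Ve (H.dropLast.getLastD h₀) (σ H.dropLast) ≤ Ve (H.getLastD h₀) c) ∧
  ∀ c' : C (H.getLastD h₀),
    (2 ≤ H.length → Ve (H.dropLast.getLastD h₀) (σ H.dropLast) ≤ Ve (H.getLastD h₀) c') →
    Vd (H.getLastD h₀) c' ≤ Vd (H.getLastD h₀) c

lemma cons_dropLast {𝓗 : Type} [Preorder 𝓗] (h₀ : 𝓗) (H : List 𝓗)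
    (hH : Cons h₀ H) (h2 : 2 ≤ H.length) : Cons h₀ H.dropLast := by
  obtain ⟨hne, hhd, hch⟩ := hH
  match H, h2 with
  | a :: b :: t, _ =>
    refine ⟨by simp, by simpa using hhd, hch.prefix (List.dropLast_prefix _)⟩

/-- Corollary 1: along the `Ve`-minimal myopic strategy `σb`
(choosing at each chain the expert-worst element of `ξ(H, σb)`), the expert's
payoff is point-wise minimal among all everywhere-myopically-optimal strategies
`σ`, and consequently the decision maker's payoff is point-wise maximal. -/
theorem Ve_minimal_myopic_strategy_is_pointwise_Vd_maximal
    {𝓗 : Type} [Fintype 𝓗] [PartialOrder 𝓗] (h₀ : 𝓗)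
    (C : 𝓗 → Type) (Vd Ve : (h : 𝓗) → C h → ℝ)
    (pb : ∀ {h h' : 𝓗}, h ≤ h' → C h → C h')
    (hpbd : ∀ {h h' : 𝓗} (l : h ≤ h') (c : C h), Vd h' (pb l c) = Vd h c)
    (hpbe : ∀ {h h' : 𝓗} (l : h ≤ h') (c : C h), Ve h' (pb l c) = Ve h c)
    (σ σb : (H : List 𝓗) → C (H.getLastD h₀))
    -- σ is myopically optimal at every chain
    (hσ : ∀ H : List 𝓗, Cons h₀ H → InXi h₀ Vd Ve σ H (σ H))
    -- σb is myopically optimal at every chain and Ve-minimal within ξ(H, σb)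
    (hσb : ∀ H : List 𝓗, Cons h₀ H → InXi h₀ Vd Ve σb H (σb H) ∧
      ∀ c : C (H.getLastD h₀), InXi h₀ Vd Ve σb H c →
        Ve (H.getLastD h₀) (σb H) ≤ Ve (H.getLastD h₀) c) :
    ∀ H : List 𝓗, Cons h₀ H →
      val h₀ Ve σb H ≤ val h₀ Ve σ H ∧ val h₀ Vd σ H ≤ val h₀ Vd σb H := by
  have key : ∀ n, ∀ H : List 𝓗, H.length ≤ n → Cons h₀ H →
      val h₀ Ve σb H ≤ val h₀ Ve σ H ∧ val h₀ Vd σ H ≤ val h₀ Vd σb H := by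
    intro n
    induction n with
    | zero =>
      intro H hlen hH
      exact absurd (List.length_eq_zero_iff.mp (Nat.le_zero.mp hlen)) hH.1
    | succ n ih =>
      intro H hlen hH
      obtain ⟨hσfeas, hσmax⟩ := hσ H hH
      obtain ⟨⟨hbfeas, hbmax⟩, hbmin⟩ := hσb H hH
      have feasσ : 2 ≤ H.length →
          Ve (H.dropLast.getLastD h₀) (σb H.dropLast) ≤ Ve (H.getLastD h₀) (σ H) := by
        intro h2
        have hH' := cons_dropLast h₀ H hH h2
        have hlen' : H.dropLast.length ≤ n := by
          have := H.length_dropLast; omega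
        exact le_trans (ih H.dropLast hlen' hH').1 (hσfeas h2)
      have hVd : Vd (H.getLastD h₀) (σ H) ≤ Vd (H.getLastD h₀) (σb H) := hbmax _ feasσ
      have hVe : Ve (H.getLastD h₀) (σb H) ≤ Ve (H.getLastD h₀) (σ H) := by
        by_contra hlt
        push_neg at hlt
        have feasb : 2 ≤ H.length →
            Ve (H.dropLast.getLastD h₀) (σ H.dropLast) ≤ Ve (H.getLastD h₀) (σb H) := by
          intro h2
          exact le_trans (hσfeas h2) hlt.le
        have hVd' : Vd (H.getLastD h₀) (σb H) ≤ Vd (H.getLastD h₀) (σ H) := hσmax _ feasb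
        have heq : Vd (H.getLastD h₀) (σ H) = Vd (H.getLastD h₀) (σb H) :=
          le_antisymm hVd hVd'
        have hmem : InXi h₀ Vd Ve σb H (σ H) :=
          ⟨feasσ, fun c' hc' => (hbmax c' hc').trans heq.ge⟩
        exact absurd (hbmin _ hmem) (not_le.mpr hlt)
      exact ⟨hVe, hVd⟩
  intro H hH
  exact key H.length H le_rfl hH
end

section
/- The expert-optimal mechanism M^e — which, for jointly compatible types (h^d, h^e) with join h̄, selects among contracts 𝔠 ∈ C(h̄) satisfying the individual-rationality constraint V_d(h̄, 𝔠) ≥ max_{𝔠' ∈ C(h^d)} V_d(h^d, 𝔠') the ones maximizing V_e(h̄, ·), and among those one maximizing V_d(h̄, ·) — is individually rational, Pareto optimal, and point-wise V_e-dominates every individually rational, incentive compatible, Pareto optimal mechanism. -/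
section Mechanism

variable {𝓗 : Type} [Lattice 𝓗] {C : 𝓗 → Type}

/-- Two types are jointly compatible if they are comparable. -/
def Compat (hd he : 𝓗) : Prop := hd ≤ he ∨ he ≤ hd

/-- Individual rationality: the decision maker's realized utility exceeds what
he could get unilaterally from any contract on his own awareness. -/
def MechIR (Vd : (h : 𝓗) → C h → ℝ) (M : (hd he : 𝓗) → C (hd ⊔ he)) : Prop :=
  ∀ hd he : 𝓗, Compat hd he → ∀ c' : C hd, Vd hd c' ≤ Vd (hd ⊔ he) (M hd he)

/-- Ex-post incentive compatibility: truthful (full) revelation is dominant for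
both players against any compatible opponent report. -/
def MechIC (Vd Ve : (h : 𝓗) → C h → ℝ) (M : (hd he : 𝓗) → C (hd ⊔ he)) : Prop :=
  (∀ h h' ht : 𝓗, h' ≤ h → Compat h ht → Compat h' ht →
    Vd (h' ⊔ ht) (M h' ht) ≤ Vd (h ⊔ ht) (M h ht)) ∧
  (∀ h h' ht : 𝓗, h' ≤ h → Compat ht h → Compat ht h' →
    Ve (ht ⊔ h') (M ht h') ≤ Ve (ht ⊔ h) (M ht h))

/-- Ex-post Pareto optimality of the realized contract. -/
def MechPO (Vd Ve : (h : 𝓗) → C h → ℝ) (M : (hd he : 𝓗) → C (hd ⊔ he)) : Prop :=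
  ∀ hd he : 𝓗, Compat hd he → ¬ ∃ c : C (hd ⊔ he),
    Vd (hd ⊔ he) (M hd he) ≤ Vd (hd ⊔ he) c ∧
    Ve (hd ⊔ he) (M hd he) ≤ Ve (hd ⊔ he) c ∧
    (Vd (hd ⊔ he) (M hd he) < Vd (hd ⊔ he) c ∨ Ve (hd ⊔ he) (M hd he) < Ve (hd ⊔ he) c)

end Mechanism

/-- Theorem 4: the expert-optimal mechanism `Me`, which selects
a `Ve`-maximal contract among those satisfying the individual-rationality
constraint (breaking ties by `Vd`), is individually rational, Pareto optimal,
and point-wise `Ve`-dominates every individually rational, incentive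
compatible, Pareto optimal mechanism. -/
theorem expert_optimal_mechanism
    {𝓗 : Type} [Lattice 𝓗]
    (C : 𝓗 → Type) [∀ h, Fintype (C h)] [∀ h, Nonempty (C h)]
    (Vd Ve : (h : 𝓗) → C h → ℝ)
    (pb : ∀ {h h' : 𝓗}, h ≤ h' → C h → C h')
    (hpbd : ∀ {h h' : 𝓗} (l : h ≤ h') (c : C h), Vd h' (pb l c) = Vd h c)
    (hpbe : ∀ {h h' : 𝓗} (l : h ≤ h') (c : C h), Ve h' (pb l c) = Ve h c)
    (Me : (hd he : 𝓗) → C (hd ⊔ he))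
    (hMe : ∀ hd he : 𝓗, Compat hd he →
      (∀ c' : C hd, Vd hd c' ≤ Vd (hd ⊔ he) (Me hd he)) ∧
      (∀ c : C (hd ⊔ he), (∀ c' : C hd, Vd hd c' ≤ Vd (hd ⊔ he) c) →
        Ve (hd ⊔ he) c ≤ Ve (hd ⊔ he) (Me hd he)) ∧
      (∀ c : C (hd ⊔ he), (∀ c' : C hd, Vd hd c' ≤ Vd (hd ⊔ he) c) →
        Ve (hd ⊔ he) c = Ve (hd ⊔ he) (Me hd he) →
        Vd (hd ⊔ he) c ≤ Vd (hd ⊔ he) (Me hd he))) :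
    MechIR Vd Me ∧ MechPO Vd Ve Me ∧
    ∀ M : (hd he : 𝓗) → C (hd ⊔ he),
      MechIR Vd M → MechIC Vd Ve M → MechPO Vd Ve M →
      ∀ hd he : 𝓗, Compat hd he →
        Ve (hd ⊔ he) (M hd he) ≤ Ve (hd ⊔ he) (Me hd he) := by
  refine ⟨fun hd he hc c' => (hMe hd he hc).1 c', ?_, ?_⟩
  · intro hd he hc ⟨c, h1, h2, h3⟩
    have hir : ∀ c' : C hd, Vd hd c' ≤ Vd (hd ⊔ he) c :=
      fun c' => le_trans ((hMe hd he hc).1 c') h1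
    have he1 := (hMe hd he hc).2.1 c hir
    have heq : Ve (hd ⊔ he) c = Ve (hd ⊔ he) (Me hd he) := le_antisymm he1 h2
    have hd1 := (hMe hd he hc).2.2 c hir heq
    rcases h3 with h | h
    · exact absurd hd1 (not_le.mpr h)
    · exact absurd he1 (not_le.mpr h)
  · intro M hIR _ _ hd he hc
    exact (hMe hd he hc).2.1 (M hd he) (fun c' => hIR hd he hc c')
end

section
/- If σ is a strategy and σ* is its 'best-response-normalization' — σ*(H) = σ(H) if H is a best response for type H₋₁ under σ, and otherwise σ*(H) = σ(H') for some chosen H' ∈ BR(h₀, H₋₁, σ) with H'₋₁ = H₋₁ — then: (i) whenever H' ∈ BR(h₀, h, σ) and σ*(H) = σ(H'), the chain H is in BR(h₀, h, σ*); (ii) σ* is effectively equivalent to σ; and (iii) the payoffs V_d(·, σ*) and V_e(·, σ*) are constant over all chains with the same final element. -/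
/-!
The key inequality is `Ve H ≤ Ve (sel H)` for every chain `H`: `sel H` is a best response for
the final element of `H`, for which `H` itself is feasible. As `sel` also preserves feasibility
for every type, the `σ*`-best responses for `h` are exactly the feasible chains whose selection is
a `σ`-best response for `h`; together with `sel H = H` on `σ`-best responses this identifies the
two sets of outcomes. Part (iii) holds because `sel` sends two chains with the same final element
to best responses for one and the same type.
-/

section BestResponse

variable {𝓗 : Type} [Preorder 𝓗] {h₀ h : 𝓗} {Ve : List 𝓗 → ℝ} {H H' : List 𝓗}

theorem Cons.memb_getLastD (hH : Cons h₀ H) : Memb h₀ (H.getLastD h₀) H :=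
  ⟨hH, le_rfl⟩

theorem BRp.getLastD (hBR : BRp h₀ Ve h H) : BRp h₀ Ve (H.getLastD h₀) H :=
  ⟨hBR.1.1.memb_getLastD, fun H' hH' => hBR.2 H' ⟨hH'.1, hH'.2.trans hBR.1.2⟩⟩

theorem BRp.value_eq (hBR : BRp h₀ Ve h H) (hBR' : BRp h₀ Ve h H') : Ve H = Ve H' :=
  le_antisymm (hBR'.2 H hBR.1) (hBR.2 H' hBR'.1)

end BestResponse

section Normalization

variable {𝓗 : Type} [Preorder 𝓗]

def FixesBestResponses (h₀ : 𝓗) (Ve : List 𝓗 → ℝ) (sel : List 𝓗 → List 𝓗) : Prop :=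
  ∀ H : List 𝓗, Cons h₀ H → BRp h₀ Ve (H.getLastD h₀) H → sel H = H

def SelectsBestResponse (h₀ : 𝓗) (Ve : List 𝓗 → ℝ) (sel : List 𝓗 → List 𝓗) : Prop :=
  ∀ H : List 𝓗, Cons h₀ H →
    BRp h₀ Ve (H.getLastD h₀) (sel H) ∧ (sel H).getLastD h₀ = H.getLastD h₀

variable {h₀ h : 𝓗} {Ve : List 𝓗 → ℝ} {sel : List 𝓗 → List 𝓗} {H H' : List 𝓗}

theorem FixesBestResponses.sel_eq (hfix : FixesBestResponses h₀ Ve sel)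
    (hBR : BRp h₀ Ve h H) : sel H = H :=
  hfix H hBR.1.1 hBR.getLastD

namespace SelectsBestResponse

theorem memb_sel (hsel : SelectsBestResponse h₀ Ve sel) (hH : Memb h₀ h H) :
    Memb h₀ h (sel H) :=
  ⟨(hsel H hH.1).1.1.1, (hsel H hH.1).2 ▸ hH.2⟩

theorem le_sel (hsel : SelectsBestResponse h₀ Ve sel) (hH : Cons h₀ H) : Ve H ≤ Ve (sel H) :=
  (hsel H hH).1.2 H hH.memb_getLastD

theorem brp_comp_of_brp_sel (hsel : SelectsBestResponse h₀ Ve sel) (hH : Memb h₀ h H)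
    (hBR : BRp h₀ Ve h (sel H)) : BRp h₀ (Ve ∘ sel) h H :=
  ⟨hH, fun _ hH' => hBR.2 _ (hsel.memb_sel hH')⟩

theorem brp_sel_of_brp_comp (hsel : SelectsBestResponse h₀ Ve sel)
    (hBR : BRp h₀ (Ve ∘ sel) h H) : BRp h₀ Ve h (sel H) :=
  ⟨hsel.memb_sel hBR.1, fun H' hH' => (hsel.le_sel hH'.1).trans (hBR.2 H' hH')⟩

theorem payoffs_eq (hsel : SelectsBestResponse h₀ Ve sel) {Vd : List 𝓗 → ℝ}
    (hVd : ∀ (h : 𝓗) (H H' : List 𝓗), BRp h₀ Ve h H → BRp h₀ Ve h H' → Vd H = Vd H')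
    (hH : Cons h₀ H) (hH' : Cons h₀ H') (hlast : H.getLastD h₀ = H'.getLastD h₀) :
    Vd (sel H) = Vd (sel H') ∧ Ve (sel H) = Ve (sel H') := by
  have hBR : BRp h₀ Ve (H'.getLastD h₀) (sel H) := hlast ▸ (hsel H hH).1
  exact ⟨hVd _ _ _ hBR (hsel H' hH').1, hBR.value_eq (hsel H' hH').1⟩

theorem effectively_equivalent (hsel : SelectsBestResponse h₀ Ve sel)
    (hfix : FixesBestResponses h₀ Ve sel) (Vd : List 𝓗 → ℝ) (h : 𝓗) :
    {t : ℝ × ℝ × 𝓗 | ∃ H, BRp h₀ Ve h H ∧ t = (Vd H, Ve H, H.getLastD h₀)} =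
      {t : ℝ × ℝ × 𝓗 | ∃ H, BRp h₀ (Ve ∘ sel) h H ∧
        t = (Vd (sel H), Ve (sel H), H.getLastD h₀)} := by
  ext t
  constructor
  · rintro ⟨H, hBR, rfl⟩
    have hfixed : sel H = H := hfix.sel_eq hBR
    refine ⟨H, hsel.brp_comp_of_brp_sel hBR.1 (by rwa [hfixed]), ?_⟩
    rw [hfixed]
  · rintro ⟨H, hBR, rfl⟩
    exact ⟨sel H, hsel.brp_sel_of_brp_comp hBR, by rw [(hsel H hBR.1.1).2]⟩

end SelectsBestResponse

end Normalization

theorem best_response_normalization_general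
    {𝓗 : Type} [PartialOrder 𝓗] (h₀ : 𝓗)
    (Vd Ve : List 𝓗 → ℝ) (sel : List 𝓗 → List 𝓗)
    -- σ* coincides with σ on best responses …
    (hsel1 : ∀ H : List 𝓗, Cons h₀ H → BRp h₀ Ve (H.getLastD h₀) H → sel H = H)
    -- … and otherwise selects a best response with the same final element
    (hsel2 : ∀ H : List 𝓗, Cons h₀ H →
      BRp h₀ Ve (H.getLastD h₀) (sel H) ∧ (sel H).getLastD h₀ = H.getLastD h₀)
    -- under robustness, Vd is constant across best responses of a common type
    -- (consequence of strong myopic optimality, Lemma A.2)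
    (hVdBR : ∀ (h : 𝓗) (H H' : List 𝓗),
      BRp h₀ Ve h H → BRp h₀ Ve h H' → Vd H = Vd H') :
    -- (i)
    (∀ (h : 𝓗) (H : List 𝓗), Memb h₀ h H → BRp h₀ Ve h (sel H) →
      BRp h₀ (Ve ∘ sel) h H) ∧
    -- (ii) effective equivalence
    (∀ h : 𝓗,
      {t : ℝ × ℝ × 𝓗 | ∃ H, BRp h₀ Ve h H ∧ t = (Vd H, Ve H, H.getLastD h₀)} =
      {t : ℝ × ℝ × 𝓗 | ∃ H, BRp h₀ (Ve ∘ sel) h H ∧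
        t = (Vd (sel H), Ve (sel H), H.getLastD h₀)}) ∧
    -- (iii) payoffs constant over chains with the same final element
    (∀ H H' : List 𝓗, Cons h₀ H → Cons h₀ H' → H.getLastD h₀ = H'.getLastD h₀ →
      Vd (sel H) = Vd (sel H') ∧ Ve (sel H) = Ve (sel H')) := by
  have hsel : SelectsBestResponse h₀ Ve sel := hsel2
  exact ⟨fun _ _ => hsel.brp_comp_of_brp_sel, hsel.effectively_equivalent hsel1 Vd,
    fun _ _ => hsel.payoffs_eq hVdBR⟩

/-- Lemma A.3, parts (i), (ii), (iv): the best-response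
normalization `σ*` of `σ` — encoded by a selection `sel` of chains, with
`σ* H = σ (sel H)` and hence payoffs `Vd ∘ sel`, `Ve ∘ sel` — satisfies:
(i) if `sel H` is a best response for type `h` (and `H` is feasible for `h`),
then `H` is a best response for `h` under `σ*`; (ii) `σ*` is effectively
equivalent to `σ`; (iii) the payoffs of `σ*` are constant over chains with the
same final element. -/
theorem best_response_normalization
    {𝓗 : Type} [Fintype 𝓗] [PartialOrder 𝓗] (h₀ : 𝓗) (hmin : ∀ h : 𝓗, h₀ ≤ h)
    (Vd Ve : List 𝓗 → ℝ) (sel : List 𝓗 → List 𝓗)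
    -- σ* coincides with σ on best responses …
    (hsel1 : ∀ H : List 𝓗, Cons h₀ H → BRp h₀ Ve (H.getLastD h₀) H → sel H = H)
    -- … and otherwise selects a best response with the same final element
    (hsel2 : ∀ H : List 𝓗, Cons h₀ H →
      BRp h₀ Ve (H.getLastD h₀) (sel H) ∧ (sel H).getLastD h₀ = H.getLastD h₀)
    -- under robustness, Vd is constant across best responses of a common type
    -- (consequence of strong myopic optimality, Lemma A.2)
    (hVdBR : ∀ (h : 𝓗) (H H' : List 𝓗),
      BRp h₀ Ve h H → BRp h₀ Ve h H' → Vd H = Vd H') :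
    -- (i)
    (∀ (h : 𝓗) (H : List 𝓗), Memb h₀ h H → BRp h₀ Ve h (sel H) →
      BRp h₀ (Ve ∘ sel) h H) ∧
    -- (ii) effective equivalence
    (∀ h : 𝓗,
      {t : ℝ × ℝ × 𝓗 | ∃ H, BRp h₀ Ve h H ∧ t = (Vd H, Ve H, H.getLastD h₀)} =
      {t : ℝ × ℝ × 𝓗 | ∃ H, BRp h₀ (Ve ∘ sel) h H ∧
        t = (Vd (sel H), Ve (sel H), H.getLastD h₀)}) ∧
    -- (iii) payoffs constant over chains with the same final element
    (∀ H H' : List 𝓗, Cons h₀ H → Cons h₀ H' → H.getLastD h₀ = H'.getLastD h₀ →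
      Vd (sel H) = Vd (sel H') ∧ Ve (sel H) = Ve (sel H')) :=
  best_response_normalization_general h₀ Vd Ve sel hsel1 hsel2 hVdBR
end
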